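/- arXiv:2303.12774 — 4 statements merged into one kernel-verified Lean document; each statement's English description precedes it below -/
import Mathlib

section
/- Let G be a finite simple graph and let E0 be the set of edges of G that are not contained in any perfect 2-matching of G. If G1, G2, …, Gk are the connected components of the graph G − E0 obtained by deleting the edges of E0, then det(G) = ∏_{i=1}^k det(Gi). -/
open scoped Classical

namespace SignInv

variable {V : Type*} {W : Type*}

/-- The adjacency matrix of `G` over `ℚ`. -/
noncomputable def adjM [Fintype V] (G : SimpleGraph V) : Matrix V V ℚ :=
  G.adjMatrix ℚ

/-- The determinant of (the adjacency matrix of) `G`; it equals `1` for the empty graph. -/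
noncomputable def detG [Fintype V] (G : SimpleGraph V) : ℚ :=
  (adjM G).det

/-- `G` is unimodular if `det G ∈ {-1, 1}`. -/
def Unimodular [Fintype V] (G : SimpleGraph V) : Prop :=
  detG G = 1 ∨ detG G = -1

/-- `G` is invertible if `det G ≠ 0`. -/
def InvertibleGraph [Fintype V] (G : SimpleGraph V) : Prop :=
  detG G ≠ 0

/-- `G` is sign-invertible if its adjacency matrix is invertible and all entries of the
inverse matrix lie in `{-1, 0, 1}`. -/
def SignInvertible [Fintype V] (G : SimpleGraph V) : Prop :=
  IsUnit (adjM G) ∧ ∀ x y : V, (adjM G)⁻¹ x y ∈ ({-1, 0, 1} : Set ℚ)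

/-- A perfect 2-matching of `G`: a spanning subgraph each of whose components is a cycle or
a single edge, i.e. all degrees are `1` or `2` and a degree-one vertex is matched to a
degree-one vertex. -/
def IsPerfect2Matching [Fintype V] (G : SimpleGraph V) (H : G.Subgraph) : Prop :=
  H.IsSpanning ∧ (∀ v : V, H.degree v = 1 ∨ H.degree v = 2) ∧
    ∀ v w : V, H.Adj v w → H.degree v = 1 → H.degree w = 1

def HasPerfect2Matching [Fintype V] (G : SimpleGraph V) : Prop :=
  ∃ H : G.Subgraph, IsPerfect2Matching G H

/-- A feasible `(x,y)`-path: a path `P` such that `G - V(P)` has a perfect 2-matching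
(the empty graph counts as having one). -/
def FeasiblePath [Fintype V] (G : SimpleGraph V) {x y : V} (P : G.Walk x y) : Prop :=
  P.IsPath ∧ HasPerfect2Matching (G.induce {v : V | v ∉ P.support})

/-- `∑_{P ∈ 𝒫_{xy}} (-1)^{|E(P)|} det (G - V(P))` over all feasible `(x,y)`-paths. -/
noncomputable def pathSum [Fintype V] (G : SimpleGraph V) (x y : V) : ℚ :=
  ∑ᶠ (P : G.Walk x y) (_ : FeasiblePath G P),
    (-1 : ℚ) ^ P.length * detG (G.induce {v : V | v ∉ P.support})

/-- One `K₂`-reduction step: `v ∈ s` has a unique neighbour `u` inside `s`, and both are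
removed from `s`. -/
def K2Step (G : SimpleGraph V) (s t : Set V) : Prop :=
  ∃ u v : V, u ∈ s ∧ v ∈ s ∧ G.Adj u v ∧ (∀ w ∈ s, G.Adj v w → w = u) ∧
    t = s \ {u, v}

/-- `G` is `K₂`-reducible if some sequence of `K₂`-reductions empties the vertex set. -/
def K2Reducible (G : SimpleGraph V) : Prop :=
  Relation.ReflTransGen (K2Step G) Set.univ (∅ : Set V)

/-- `v` has degree one in the subgraph of `G` induced on `s`. -/
def DegreeOneIn (G : SimpleGraph V) (s : Set V) (v : V) : Prop :=
  v ∈ s ∧ ∃ u ∈ s, G.Adj v u ∧ ∀ w ∈ s, G.Adj v w → w = u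

/-- `s` induces a `K₂`-irreducible subgraph of `G`: it is obtained from `G` by a sequence of
`K₂`-reductions and has no vertex of degree one. -/
def K2Irreducible (G : SimpleGraph V) (s : Set V) : Prop :=
  Relation.ReflTransGen (K2Step G) Set.univ s ∧ ∀ v : V, ¬ DegreeOneIn G s v

/-- `v` has degree one in `H`. -/
def DegreeOne (H : SimpleGraph W) (v : W) : Prop :=
  ∃! u : W, H.Adj v u

/-- A peg of the cycle `C` is an edge of the matching `M` with exactly one endpoint on `C`. -/
def IsPeg (G : SimpleGraph V) (M : G.Subgraph) {c : V} (C : G.Walk c c)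
    (e : Sym2 V) : Prop :=
  e ∈ M.edgeSet ∧ ∃ u v : V, e = s(u, v) ∧ u ∈ C.support ∧ v ∉ C.support

noncomputable def pegCount (G : SimpleGraph V) (M : G.Subgraph) {c : V}
    (C : G.Walk c c) : ℕ :=
  {e : Sym2 V | IsPeg G M C e}.ncard

/-- `v` is the attachment of the peg `e` of the cycle `C`. -/
def IsAttachment (G : SimpleGraph V) (M : G.Subgraph) {c : V} (C : G.Walk c c)
    (e : Sym2 V) (v : V) : Prop :=
  IsPeg G M C e ∧ v ∈ e ∧ v ∈ C.support

/-- `v1, v2` separate the cycle `C` into two paths whose numbers of vertices are both even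
and not congruent to each other modulo 4. -/
def SeparatesEvenNoncong (G : SimpleGraph V) {c : V} (C : G.Walk c c)
    (v1 v2 : V) : Prop :=
  ∃ (W1 W2 : G.Walk v1 v2), W1.IsPath ∧ W2.IsPath ∧
    (∀ e : Sym2 V, e ∈ C.edges ↔ (e ∈ W1.edges ∨ e ∈ W2.edges)) ∧
    (∀ e : Sym2 V, e ∈ W1.edges → e ∉ W2.edges) ∧
    W1.support.length % 2 = 0 ∧ W2.support.length % 2 = 0 ∧
    ¬ (W1.support.length % 4 = W2.support.length % 4)

/-- The peg condition for a cycle `C`: at least three pegs, or exactly two pegs whose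
attachments separate `C` into two paths with even, non-congruent (mod 4) numbers of
vertices. -/
def PegCondition (G : SimpleGraph V) (M : G.Subgraph) {c : V}
    (C : G.Walk c c) : Prop :=
  3 ≤ pegCount G M C ∨
  (pegCount G M C = 2 ∧
    ∀ (e1 e2 : Sym2 V) (v1 v2 : V), e1 ≠ e2 →
      IsAttachment G M C e1 v1 → IsAttachment G M C e2 v2 →
      SeparatesEvenNoncong G C v1 v2)

/-- Every vertex of `s` has at least two neighbours inside `s`. -/
def MinDeg2On (G : SimpleGraph V) (s : Set V) : Prop :=
  ∀ v ∈ s, ∃ u w : V, u ∈ s ∧ w ∈ s ∧ u ≠ w ∧ G.Adj v u ∧ G.Adj v w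

/-- The vertex set of the 2-core of `G` (maximal set inducing minimum degree ≥ 2). -/
def twoCoreSet (G : SimpleGraph V) : Set V :=
  ⋃₀ {s : Set V | MinDeg2On G s}

/-- All pegs of all cycles of `G`. -/
def pegSet (G : SimpleGraph V) (M : G.Subgraph) : Set (Sym2 V) :=
  {e | ∃ (c : V) (C : G.Walk c c), C.IsCycle ∧ IsPeg G M C e}

def semiTwoCoreVerts (G : SimpleGraph V) (M : G.Subgraph) : Set V :=
  twoCoreSet G ∪ {v | ∃ e ∈ pegSet G M, v ∈ e}

def semiTwoCoreEdges (G : SimpleGraph V) (M : G.Subgraph) : Set (Sym2 V) :=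
  {e | e ∈ G.edgeSet ∧ ∀ v ∈ e, v ∈ twoCoreSet G} ∪ pegSet G M

/-- The semi-2-core of `G`: the 2-core together with all pegs, as a graph. -/
def semiTwoCore (G : SimpleGraph V) (M : G.Subgraph) :
    SimpleGraph ↥(semiTwoCoreVerts G M) :=
  (G ⊓ SimpleGraph.fromEdgeSet (semiTwoCoreEdges G M)).induce (semiTwoCoreVerts G M)

/-- Witness data for `H` being a theta graph `Θ(a,b,c)` with central paths with vertex sets
`S1, S2, S3`: two distinct vertices joined by three internally disjoint paths having
`a`, `b`, `c` vertices, covering all vertices and all edges of `H`. -/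
def ThetaWitness (H : SimpleGraph W) (a b c : ℕ)
    (S1 S2 S3 : Set W) : Prop :=
  ∃ (x y : W) (P1 P2 P3 : H.Walk x y),
    x ≠ y ∧ P1.IsPath ∧ P2.IsPath ∧ P3.IsPath ∧
    P1.support.length = a ∧ P2.support.length = b ∧ P3.support.length = c ∧
    (∀ v : W, v ∈ P1.support → v ∈ P2.support → v = x ∨ v = y) ∧
    (∀ v : W, v ∈ P1.support → v ∈ P3.support → v = x ∨ v = y) ∧
    (∀ v : W, v ∈ P2.support → v ∈ P3.support → v = x ∨ v = y) ∧
    (∀ v : W, v ∈ P1.support ∨ v ∈ P2.support ∨ v ∈ P3.support) ∧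
    H.edgeSet = {e | e ∈ P1.edges ∨ e ∈ P2.edges ∨ e ∈ P3.edges} ∧
    S1 = {v | v ∈ P1.support} ∧ S2 = {v | v ∈ P2.support} ∧
    S3 = {v | v ∈ P3.support}

/-- `H` is a theta graph `Θ(a,b,c)`. -/
def IsThetaGraph (H : SimpleGraph W) (a b c : ℕ) : Prop :=
  ∃ S1 S2 S3 : Set W, ThetaWitness H a b c S1 S2 S3

/-- `H` is a barbell graph `B(a,b;t)`: two cycles of lengths `a` and `b` joined by a path
with `t` vertices internally disjoint from the cycles (for `t = 1` the cycles share exactly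
one vertex). -/
def IsBarbell (H : SimpleGraph W) (a b t : ℕ) : Prop :=
  ∃ (u v : W) (C1 : H.Walk u u) (C2 : H.Walk v v) (P : H.Walk u v),
    C1.IsCycle ∧ C2.IsCycle ∧ P.IsPath ∧
    C1.length = a ∧ C2.length = b ∧ P.support.length = t ∧
    (∀ w : W, w ∈ C1.support → w ∈ C2.support → w = u ∧ w = v) ∧
    (∀ w : W, w ∈ P.support → w ∈ C1.support → w = u) ∧
    (∀ w : W, w ∈ P.support → w ∈ C2.support → w = v) ∧
    (∀ w : W, w ∈ C1.support ∨ w ∈ C2.support ∨ w ∈ P.support) ∧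
    H.edgeSet = {e | e ∈ C1.edges ∨ e ∈ C2.edges ∨ e ∈ P.edges}

/-- `H` is a cycle graph of length `n`. -/
def IsCycleGraphOn (H : SimpleGraph W) (n : ℕ) : Prop :=
  ∃ (c : W) (C : H.Walk c c), C.IsCycle ∧ C.length = n ∧
    (∀ v : W, v ∈ C.support) ∧ H.edgeSet = {e | e ∈ C.edges}

/-- `P` is `MM`-alternating: the edges of `P` lying in `M` form a perfect matching of `P`. -/
def MMAlternating (G : SimpleGraph V) (M : G.Subgraph) {x y : V}
    (P : G.Walk x y) : Prop :=
  ∀ v ∈ P.support, ∃! e : Sym2 V, e ∈ P.edges ∧ e ∈ M.edgeSet ∧ v ∈ e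

/-- The number of feasible `(x,y)`-paths with an odd number of edges outside `M`. -/
noncomputable def tauOdd [Fintype V] (G : SimpleGraph V) (M : G.Subgraph)
    (x y : V) : ℕ :=
  {P : G.Walk x y | FeasiblePath G P ∧
    (P.edges.countP fun e => decide (e ∉ M.edgeSet)) % 2 = 1}.ncard

/-- The number of feasible `(x,y)`-paths with an even number of edges outside `M`. -/
noncomputable def tauEven [Fintype V] (G : SimpleGraph V) (M : G.Subgraph)
    (x y : V) : ℕ :=
  {P : G.Walk x y | FeasiblePath G P ∧
    (P.edges.countP fun e => decide (e ∉ M.edgeSet)) % 2 = 0}.ncard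

/-- A crab-graph: a `K₂`-reducible bicyclic graph whose 2-core is a theta graph, having
exactly two degree-one vertices `x`, `y` and exactly three feasible `(x,y)`-paths, each with
an even number of vertices, these numbers being not all congruent modulo 4. -/
def IsCrabGraph [Fintype W] (H : SimpleGraph W) : Prop :=
  K2Reducible H ∧ H.Connected ∧ H.edgeSet.ncard = Fintype.card W + 1 ∧
  (∃ a b c : ℕ, IsThetaGraph (H.induce (twoCoreSet H)) a b c) ∧
  ∃ x y : W, x ≠ y ∧ DegreeOne H x ∧ DegreeOne H y ∧
    (∀ v : W, DegreeOne H v → v = x ∨ v = y) ∧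
    ∃ P1 P2 P3 : H.Walk x y,
      FeasiblePath H P1 ∧ FeasiblePath H P2 ∧ FeasiblePath H P3 ∧
      P1 ≠ P2 ∧ P1 ≠ P3 ∧ P2 ≠ P3 ∧
      (∀ P : H.Walk x y, FeasiblePath H P → P = P1 ∨ P = P2 ∨ P = P3) ∧
      P1.support.length % 2 = 0 ∧ P2.support.length % 2 = 0 ∧
      P3.support.length % 2 = 0 ∧
      ¬ (P1.support.length % 4 = P2.support.length % 4 ∧
         P2.support.length % 4 = P3.support.length % 4)


/-- The set of edges of `G` not contained in any perfect 2-matching of `G`. -/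
def E0 [Fintype V] (G : SimpleGraph V) : Set (Sym2 V) :=
  {e | e ∈ G.edgeSet ∧ ∀ H : G.Subgraph, IsPerfect2Matching G H → e ∉ H.edgeSet}

/-!
Every nonzero term `sign σ ∏ᵥ A(σ v, v)` of the Leibniz expansion of `det A(G)` comes from a
permutation `σ` with `σ v ~ v` for all `v`; the edges `{v, σ v}` then form a perfect 2-matching
(the 2-cycles of `σ` give single edges, the longer cycles give cycles). So no such term uses an
edge of `E0`, and `det A(G) = det A(G - E0)`. Finally, the adjacency matrix of any graph is block
diagonal along its connected components.
-/

def permSubgraph (G : SimpleGraph V) (σ : Equiv.Perm V) (h : ∀ v, G.Adj (σ v) v) :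
    G.Subgraph where
  verts := Set.univ
  Adj v w := w = σ v ∨ v = σ w
  adj_sub := by
    rintro v w (rfl | rfl)
    · exact (h v).symm
    · exact h w
  edge_vert _ := trivial
  symm := ⟨fun _ _ => Or.symm⟩

section permSubgraph

variable (G : SimpleGraph V) (σ : Equiv.Perm V) (h : ∀ v, G.Adj (σ v) v)

lemma permSubgraph_neighborSet (v : V) :
    (permSubgraph G σ h).neighborSet v = {σ v, σ⁻¹ v} := by
  ext w
  simp only [SimpleGraph.Subgraph.mem_neighborSet, permSubgraph, Set.mem_insert_iff,
    Set.mem_singleton_iff, Equiv.Perm.eq_inv_iff_eq, eq_comm (a := v)]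

lemma permSubgraph_degree [Fintype V] (v : V) :
    (permSubgraph G σ h).degree v = if σ v = σ⁻¹ v then 1 else 2 := by
  rw [SimpleGraph.Subgraph.degree,
    Fintype.card_congr (Equiv.setCongr (permSubgraph_neighborSet G σ h v))]
  split_ifs with hv
  · simp [hv]
  · rw [← Set.toFinset_card, Set.toFinset_insert, Set.toFinset_singleton,
      Finset.card_insert_of_notMem (by simpa using hv), Finset.card_singleton]

lemma isPerfect2Matching_permSubgraph [Fintype V] :
    IsPerfect2Matching G (permSubgraph G σ h) := by
  refine ⟨fun _ => trivial, fun v => ?_, fun v w hvw hv => ?_⟩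
  · rw [permSubgraph_degree]
    split_ifs <;> simp
  · rw [permSubgraph_degree] at hv ⊢
    have hσv : σ v = σ⁻¹ v := by by_contra hne; rw [if_neg hne] at hv; omega
    have hw : w = σ v := by
      rcases hvw with rfl | rfl
      · rfl
      · simp [hσv]
    subst hw
    rw [if_pos (by nth_rw 1 [hσv]; simp)]

end permSubgraph

theorem _root_.Matrix.det_eq_prod_toSquareBlock {m α R : Type*} [Fintype m] [DecidableEq m]
    [Fintype α] [DecidableEq α] [CommRing R] (M : Matrix m m R) (b : m → α)
    (h : ∀ i j, b i ≠ b j → M i j = 0) :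
    M.det = ∏ a, (M.toSquareBlock b a).det := by
  obtain ⟨_⟩ : Nonempty (LinearOrder α) := ⟨LinearOrder.lift' _ (Fintype.equivFin α).injective⟩
  exact Matrix.BlockTriangular.det_fintype fun i j hij => h i j (ne_of_gt hij)

theorem det_adjMatrix_deleteEdges {R : Type*} [CommRing R] [Fintype V]
    (G : SimpleGraph V) (s : Set (Sym2 V))
    (hs : ∀ σ : Equiv.Perm V, (∀ v, G.Adj (σ v) v) → ∀ v, s(σ v, v) ∉ s) :
    ((G.deleteEdges s).adjMatrix R).det = (G.adjMatrix R).det := by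
  rw [Matrix.det_apply, Matrix.det_apply]
  refine Finset.sum_congr rfl fun σ _ => congrArg _ ?_
  by_cases hσ : ∀ v, G.Adj (σ v) v
  · refine Finset.prod_congr rfl fun v _ => ?_
    rw [SimpleGraph.adjMatrix_apply, SimpleGraph.adjMatrix_apply,
      if_pos (SimpleGraph.deleteEdges_adj.2 ⟨hσ v, hs σ hσ v⟩), if_pos (hσ v)]
  · obtain ⟨v, hv⟩ := not_forall.1 hσ
    rw [Finset.prod_eq_zero (Finset.mem_univ v), Finset.prod_eq_zero (Finset.mem_univ v)]
    · rw [SimpleGraph.adjMatrix_apply, if_neg hv]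
    · rw [SimpleGraph.adjMatrix_apply, if_neg fun hadj => hv hadj.1]

theorem det_adjMatrix_deleteEdges_E0 {R : Type*} [CommRing R] [Fintype V]
    (G : SimpleGraph V) :
    ((G.deleteEdges (E0 G)).adjMatrix R).det = (G.adjMatrix R).det :=
  det_adjMatrix_deleteEdges G (E0 G) fun σ hσ _ hv =>
    hv.2 _ (isPerfect2Matching_permSubgraph G σ hσ) (Or.inr rfl)

theorem det_adjMatrix_eq_prod_connectedComponent {R : Type*} [CommRing R] [Fintype V]
    (G : SimpleGraph V) :
    (G.adjMatrix R).det =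
      ∏ c : G.ConnectedComponent, ((G.induce c.supp).adjMatrix R).det := by
  rw [Matrix.det_eq_prod_toSquareBlock _ G.connectedComponentMk fun v w hvw => ?_]
  · refine Finset.prod_congr rfl fun c _ => ?_
    let e : {v // G.connectedComponentMk v = c} ≃ c.supp :=
      Equiv.subtypeEquivRight fun _ => Iff.rfl
    have hblock : (G.adjMatrix R).toSquareBlock G.connectedComponentMk c =
        ((G.induce c.supp).adjMatrix R).submatrix e e := rfl
    rw [hblock, Matrix.det_submatrix_equiv_self]
  · rw [SimpleGraph.adjMatrix_apply,
      if_neg fun hadj => hvw (SimpleGraph.ConnectedComponent.sound hadj.reachable)]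

/-- If `E0` is the set of edges of `G` in no perfect 2-matching and
`G₁, …, G_k` are the connected components of `G - E0`, then
`det G = ∏ᵢ det Gᵢ`. -/
theorem det_eq_prod_components {V : Type*} [Fintype V] (G : SimpleGraph V) :
    detG G =
      ∏ c : (G.deleteEdges (E0 G)).ConnectedComponent,
        detG ((G.deleteEdges (E0 G)).induce c.supp) := by
  simp only [detG, adjM]
  rw [← det_adjMatrix_deleteEdges_E0]
  convert det_adjMatrix_eq_prod_connectedComponent (G.deleteEdges (E0 G))

end SignInv
end

section
/- Every K2-reducible finite simple graph has a unique perfect 2-matching, and this unique perfect 2-matching is a perfect matching. -/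
open scoped Classical

namespace SignInv

variable {V : Type*} {W : Type*}

/-!
If `v` is pendant with neighbour `u`, then in any perfect 2-matching `v` can only be matched
to `u`, so `v` has degree one there; a degree-one vertex is matched to a degree-one vertex, so
`uv` is a single-edge component. Deleting it leaves a perfect 2-matching of the reduced graph,
so induction along the reduction sequence shows there is at most one perfect 2-matching, while
the edges `uv` removed along the way form a perfect matching.
-/

section

open SimpleGraph

variable {G : SimpleGraph V} {H : G.Subgraph} {S : Set V} {u v w : V}

theorem neighborSet_deleteVerts_of_disjoint (hw : w ∉ S) (hS : Disjoint (H.neighborSet w) S) :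
    (H.deleteVerts S).neighborSet w = H.neighborSet w := by
  ext x
  simp only [Subgraph.mem_neighborSet, Subgraph.deleteVerts_adj]
  exact ⟨fun h => h.2.2.2.2, fun h =>
    ⟨H.edge_vert h, hw, H.edge_vert h.symm, Set.disjoint_left.1 hS h, h⟩⟩

theorem eq_of_adj_of_degree_eq_one [Fintype (H.neighborSet u)] (huv : H.Adj u v)
    (hu : H.degree u = 1) (huw : H.Adj u w) : w = v :=
  (Subgraph.degree_eq_one_iff_existsUnique_adj.1 hu).unique huw huv

theorem eq_deleteVerts_sup_subgraphOfAdj (huv : H.Adj u v) (hu : ∀ w, H.Adj u w → w = v)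
    (hv : ∀ w, H.Adj v w → w = u) :
    H = H.deleteVerts {u, v} ⊔ G.subgraphOfAdj (H.adj_sub huv) := by
  ext a b
  · simp only [Subgraph.verts_sup, Subgraph.deleteVerts_verts, subgraphOfAdj_verts]
    rw [Set.sdiff_union_of_subset (Set.pair_subset (H.edge_vert huv) (H.edge_vert huv.symm))]
  · simp only [Subgraph.sup_adj, Subgraph.deleteVerts_adj, subgraphOfAdj_adj, Sym2.eq_iff,
      Set.mem_insert_iff, Set.mem_singleton_iff]
    constructor
    · intro hab
      grind [H.edge_vert hab, H.edge_vert hab.symm, hab.symm]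
    · rintro (h | ⟨rfl, rfl⟩ | ⟨rfl, rfl⟩)
      exacts [h.2.2.2.2, huv, huv.symm]

theorem exists_isMatching_verts_eq_of_reflTransGen_k2Step {s : Set V}
    (hs : Relation.ReflTransGen (K2Step G) s ∅) : ∃ M : G.Subgraph, M.IsMatching ∧ M.verts = s := by
  induction hs using Relation.ReflTransGen.head_induction_on with
  | refl => exact ⟨⊥, fun v hv => absurd hv (Set.notMem_empty v), rfl⟩
  | head hst _ ih =>
    obtain ⟨u, v, hu, hv, huv, -, rfl⟩ := hst
    obtain ⟨M, hM, hMs⟩ := ih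
    refine ⟨M ⊔ G.subgraphOfAdj huv, hM.sup (.subgraphOfAdj huv) ?_, ?_⟩
    · rw [hM.support_eq_verts, (Subgraph.IsMatching.subgraphOfAdj huv).support_eq_verts, hMs,
        subgraphOfAdj_verts]
      exact Set.disjoint_sdiff_left
    · rw [Subgraph.verts_sup, hMs, subgraphOfAdj_verts,
        Set.sdiff_union_of_subset (Set.pair_subset hu hv)]

variable [Fintype V]

def Is2Matching (H : G.Subgraph) : Prop :=
  (∀ v ∈ H.verts, H.degree v = 1 ∨ H.degree v = 2) ∧
    ∀ v w : V, H.Adj v w → H.degree v = 1 → H.degree w = 1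

theorem isPerfect2Matching_iff : IsPerfect2Matching G H ↔ H.IsSpanning ∧ Is2Matching H :=
  ⟨fun ⟨hsp, hdeg, hadj⟩ => ⟨hsp, fun v _ => hdeg v, hadj⟩,
    fun ⟨hsp, hdeg, hadj⟩ => ⟨hsp, fun v => hdeg v (hsp v), hadj⟩⟩

theorem Is2Matching.of_isMatching (hH : H.IsMatching) : Is2Matching H := by
  rw [Subgraph.isMatching_iff_forall_degree] at hH
  exact ⟨fun v hv => .inl (hH v hv), fun _ w hvw _ => hH w (H.edge_vert hvw.symm)⟩

theorem Is2Matching.of_neighborSet_eq {H' : G.Subgraph} (hH : Is2Matching H)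
    (hverts : H'.verts ⊆ H.verts) (hnbr : ∀ w ∈ H'.verts, H'.neighborSet w = H.neighborSet w) :
    Is2Matching H' := by
  have hdeg : ∀ w ∈ H'.verts, H'.degree w = H.degree w := fun w hw =>
    Fintype.card_congr (Equiv.setCongr (hnbr w hw))
  refine ⟨fun w hw => hdeg w hw ▸ hH.1 w (hverts hw), fun a b hab ha => ?_⟩
  have ha' := H'.edge_vert hab
  rw [hdeg a ha'] at ha
  rw [hdeg b (H'.edge_vert hab.symm)]
  exact hH.2 a b (show b ∈ H.neighborSet a from hnbr a ha' ▸ hab) ha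

theorem Is2Matching.deleteVerts_pair (hH : Is2Matching H) (huv : H.Adj u v)
    (hu : H.degree u = 1) (hv : H.degree v = 1) : Is2Matching (H.deleteVerts {u, v}) := by
  refine hH.of_neighborSet_eq Set.sdiff_subset fun w hw =>
    neighborSet_deleteVerts_of_disjoint hw.2 (Set.disjoint_left.2 ?_)
  rintro x hwx (rfl | rfl)
  · exact hw.2 (.inr (eq_of_adj_of_degree_eq_one huv hu hwx.symm))
  · exact hw.2 (.inl (eq_of_adj_of_degree_eq_one huv.symm hv hwx.symm))

theorem Is2Matching.exists_eq_deleteVerts_sup_of_pendant (hH : Is2Matching H) (hv : v ∈ H.verts)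
    (hvu : ∀ w ∈ H.verts, G.Adj v w → w = u) :
    ∃ huv : H.Adj u v, Is2Matching (H.deleteVerts {u, v}) ∧
      H = H.deleteVerts {u, v} ⊔ G.subgraphOfAdj (H.adj_sub huv) := by
  have hvu' : ∀ w, H.Adj v w → w = u := fun w hw => hvu w (H.edge_vert hw.symm) (H.adj_sub hw)
  have hvpos : 0 < H.degree v := by rcases hH.1 v hv with h | h <;> omega
  obtain ⟨w, hw⟩ := Subgraph.degree_pos_iff_exists_adj.1 hvpos
  have huv : H.Adj u v := (hvu' w hw ▸ hw).symm
  have hv1 : H.degree v = 1 := Subgraph.degree_eq_one_iff_existsUnique_adj.2 ⟨u, huv.symm, hvu'⟩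
  have hu1 : H.degree u = 1 := hH.2 v u huv.symm hv1
  exact ⟨huv, hH.deleteVerts_pair huv hu1 hv1, eq_deleteVerts_sup_subgraphOfAdj huv
    (fun _ => eq_of_adj_of_degree_eq_one huv hu1) hvu'⟩

theorem Is2Matching.eq_of_reflTransGen_k2Step {s : Set V}
    (hs : Relation.ReflTransGen (K2Step G) s ∅) {H₁ H₂ : G.Subgraph} (h₁ : Is2Matching H₁)
    (h₂ : Is2Matching H₂) (hs₁ : H₁.verts = s) (hs₂ : H₂.verts = s) : H₁ = H₂ := by
  induction hs using Relation.ReflTransGen.head_induction_on generalizing H₁ H₂ with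
  | refl => rw [H₁.eq_bot_iff_verts_eq_empty.2 hs₁, H₂.eq_bot_iff_verts_eq_empty.2 hs₂]
  | head hst _ ih =>
    obtain ⟨u, v, -, hv, -, hvu, rfl⟩ := hst
    obtain ⟨huv₁, hd₁, he₁⟩ := h₁.exists_eq_deleteVerts_sup_of_pendant (hs₁ ▸ hv) (hs₁ ▸ hvu)
    obtain ⟨huv₂, hd₂, he₂⟩ := h₂.exists_eq_deleteVerts_sup_of_pendant (hs₂ ▸ hv) (hs₂ ▸ hvu)
    calc H₁ = H₁.deleteVerts {u, v} ⊔ G.subgraphOfAdj (H₁.adj_sub huv₁) := he₁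
      _ = H₂.deleteVerts {u, v} ⊔ G.subgraphOfAdj (H₂.adj_sub huv₂) := by
        rw [ih hd₁ hd₂ (by rw [Subgraph.deleteVerts_verts, hs₁])
          (by rw [Subgraph.deleteVerts_verts, hs₂])]
      _ = H₂ := he₂.symm

end

/-- A `K₂`-reducible graph has a unique perfect 2-matching, and this
unique perfect 2-matching is a perfect matching. -/
theorem k2Reducible_unique_perfect2Matching {V : Type*} [Fintype V] (G : SimpleGraph V)
    (h : K2Reducible G) :
    (∃! H : G.Subgraph, IsPerfect2Matching G H) ∧
    ∀ H : G.Subgraph, IsPerfect2Matching G H → H.IsPerfectMatching := by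
  obtain ⟨M, hM, hMs⟩ := exists_isMatching_verts_eq_of_reflTransGen_k2Step h
  have hM2 : IsPerfect2Matching G M :=
    isPerfect2Matching_iff.2 ⟨SimpleGraph.Subgraph.isSpanning_iff.2 hMs, .of_isMatching hM⟩
  have huniq : ∀ H, IsPerfect2Matching G H → H = M := fun H hH =>
    have ⟨hHsp, hH2⟩ := isPerfect2Matching_iff.1 hH
    hH2.eq_of_reflTransGen_k2Step h (.of_isMatching hM)
      (SimpleGraph.Subgraph.isSpanning_iff.1 hHsp) hMs
  exact ⟨⟨M, hM2, huniq⟩, fun H hH => huniq H hH ▸ ⟨hM, hM2.1⟩⟩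

end SignInv
end

section
/- Let G be a finite simple graph and let H be any graph obtained from G by a sequence of K2-reductions such that H has no vertex of degree one (a K2-irreducible subgraph of G). Then G is invertible if and only if H is invertible; in particular, if G is K2-reducible then G is invertible. -/
open scoped Classical

namespace SignInv

variable {V : Type*} {W : Type*}

/-! If `v` is a pendant vertex with neighbour `u`, swapping the rows of `u` and `v` makes the
adjacency matrix block upper triangular with diagonal blocks `(1)`, `A(G - u - v)`, `(1)`, so
`det G = -det (G - u - v)`. Hence `|det|` is invariant under `K₂`-reductions, and a complete
reduction ends at the empty graph, whose determinant is `1`. -/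

theorem _root_.Matrix.det_eq_neg_mul_det_submatrix_of_pendant {α R : Type*} [Fintype α]
    [DecidableEq α] [CommRing R] (M : Matrix α α R) {u v : α} (huv : u ≠ v)
    (hrow : ∀ w, w ≠ u → M v w = 0) (hcol : ∀ w, w ≠ u → M w v = 0)
    (p : α → Prop) [DecidablePred p] (hp : ∀ x, p x ↔ x ≠ u ∧ x ≠ v) :
    M.det = -(M u v * M v u) * (M.submatrix ((↑) : Subtype p → α) (↑)).det := by
  let N := M.submatrix (Equiv.swap u v) id
  let b : α → Fin 3 := fun x => if x = v then 0 else if x = u then 2 else 1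
  have hN : N.BlockTriangular b := by
    intro i j hji
    simp only [N, Matrix.submatrix_apply, id]
    by_cases hiv : i = v
    · simp [b, hiv] at hji
    by_cases hiu : i = u
    · subst hiu
      rw [Equiv.swap_apply_left]
      exact hrow j (by rintro rfl; simp [b, huv] at hji)
    · rw [Equiv.swap_apply_of_ne_of_ne hiu hiv]
      have hjv : j = v := by
        by_contra hjv
        by_cases hju : j = u <;> simp [b, hiu, hiv, hjv, hju, huv] at hji
      exact hjv ▸ hcol i hiu
  have hdetN : N.det = -M.det := by simp [N, Matrix.det_permute, Equiv.Perm.sign_swap huv]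
  have hsingleton : ∀ k w, (∀ x, b x = k ↔ x = w) → (N.toSquareBlock b k).det = N w w := by
    intro k w hw
    let : Unique {x // b x = k} := ⟨⟨⟨w, (hw w).2 rfl⟩⟩, fun x => Subtype.ext ((hw x).1 x.2)⟩
    exact Matrix.det_unique _
  have hb : ∀ x, (b x = 0 ↔ x = v) ∧ (b x = 1 ↔ p x) ∧ (b x = 2 ↔ x = u) := fun x => by
    rw [hp]; by_cases hxv : x = v <;> by_cases hxu : x = u <;> simp [b, hxv, hxu, huv, huv.symm]
  have h1 : (N.toSquareBlock b 1).det = (M.submatrix ((↑) : Subtype p → α) (↑)).det := by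
    rw [Matrix.toSquareBlock, Matrix.equiv_block_det N (q := p) fun x => (hb x).2.1.symm]
    congr 1
    ext x y
    have := (hp x).1 x.2
    simp [N, Matrix.toSquareBlockProp, Matrix.toBlock, Equiv.swap_apply_of_ne_of_ne this.1 this.2]
  rw [← neg_neg M.det, ← hdetN, hN.det_fintype, Fin.prod_univ_three,
    hsingleton 0 v fun x => (hb x).1, h1, hsingleton 2 u fun x => (hb x).2.2]
  simp only [N, Matrix.submatrix_apply, Equiv.swap_apply_left, Equiv.swap_apply_right, id]
  ring

-- `detG` uses the classical `DecidableEq` instance; this lets any other one be used instead.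
theorem detG_eq_det {V : Type*} [Fintype V] [DecidableEq V] (G : SimpleGraph V) :
    detG G = (adjM G).det := by
  unfold detG
  congr

-- Stated for `s = univ` and `s = ∅` so that `Fintype s` is the generic instance; the special
-- instances on `↥univ` and `↥∅` are not reducibly equal to it, which defeats `rw`.
theorem detG_induce_of_eq_univ {V : Type*} [Fintype V] (G : SimpleGraph V) {s : Set V}
    (hs : s = Set.univ) : detG (G.induce s) = detG G := by
  rw [detG_eq_det, detG_eq_det,
    ← Matrix.det_submatrix_equiv_self ((Equiv.setCongr hs).trans (Equiv.Set.univ V)) (adjM G)]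
  rfl

theorem detG_induce_of_eq_empty {V : Type*} [Fintype V] (G : SimpleGraph V) {s : Set V}
    (hs : s = ∅) : detG (G.induce s) = 1 := by
  have : IsEmpty s := Set.isEmpty_coe_sort.2 hs
  rw [detG_eq_det, Matrix.det_isEmpty]

theorem detG_induce_of_k2Step {V : Type*} [Fintype V] {G : SimpleGraph V} {s t : Set V}
    (h : K2Step G s t) : detG (G.induce s) = -detG (G.induce t) := by
  obtain ⟨u, v, hu, hv, huv, hv_pendant, ht⟩ := h
  have hM : ∀ x y : s, adjM (G.induce s) x y = if G.Adj x y then 1 else 0 := fun x y =>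
    SimpleGraph.adjMatrix_apply _ _ _
  have key := (adjM (G.induce s)).det_eq_neg_mul_det_submatrix_of_pendant
    (u := ⟨u, hu⟩) (v := ⟨v, hv⟩) (by simpa using huv.ne)
    (fun w hw => by rw [hM, if_neg fun h => hw (Subtype.ext (hv_pendant w w.2 h))])
    (fun w hw => by rw [hM, if_neg fun h => hw (Subtype.ext (hv_pendant w w.2 h.symm))])
    (fun x => (x : V) ∈ t) (fun x => by simp [ht, Subtype.ext_iff])
  rw [hM, hM, if_pos huv, if_pos huv.symm, mul_one, neg_one_mul] at key
  let e : {x : s // (x : V) ∈ t} ≃ t :=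
    Equiv.subtypeSubtypeEquivSubtype fun hx => (ht ▸ hx : _ ∈ s \ {u, v}).1
  rw [detG_eq_det, detG_eq_det, key, ← Matrix.det_submatrix_equiv_self e]
  rfl

theorem abs_detG_induce_eq_of_reflTransGen {V : Type*} [Fintype V] {G : SimpleGraph V}
    {s t : Set V} (h : Relation.ReflTransGen (K2Step G) s t) :
    |detG (G.induce s)| = |detG (G.induce t)| := by
  induction h with
  | refl => rfl
  | tail _ hstep ih => rw [ih, detG_induce_of_k2Step hstep, abs_neg]

/-- If `s` induces a `K₂`-irreducible subgraph of `G`, then `G` is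
invertible iff it is; in particular a `K₂`-reducible graph is invertible. -/
theorem invertible_iff_k2Irreducible {V : Type*} [Fintype V] (G : SimpleGraph V)
    (s : Set V) (h : K2Irreducible G s) :
    (InvertibleGraph G ↔ InvertibleGraph (G.induce s)) ∧
    (K2Reducible G → InvertibleGraph G) := by
  have hs := abs_detG_induce_eq_of_reflTransGen h.1
  rw [detG_induce_of_eq_univ G rfl] at hs
  refine ⟨by rw [InvertibleGraph, InvertibleGraph, ← abs_ne_zero, hs, abs_ne_zero], fun hred => ?_⟩
  have hempty := abs_detG_induce_eq_of_reflTransGen hred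
  rw [detG_induce_of_eq_univ G rfl, detG_induce_of_eq_empty G rfl, abs_one] at hempty
  exact abs_ne_zero.1 (hempty ▸ one_ne_zero)

end SignInv
end

section
/- Let G be a finite simple graph with a unique perfect 2-matching. If G is sign-invertible, then G is K2-reducible. -/
open scoped Classical

namespace SignInv

variable {V : Type*} {W : Type*}

/-!
Over `ZMod 2` the determinant of the adjacency matrix is the number of cycle covers
(permutations `σ` with `v ~ σ v` for all `v`); pairing `σ` with `σ⁻¹` cancels all of them except
the involutive ones, which are perfect matchings. A sign-invertible graph has an integral
adjacency matrix with integral inverse, so its determinant is odd and it has a perfect matching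
`τ`. Every cycle cover induces a perfect 2-matching, and this 2-matching is unique, so `τ` is the
only cycle cover.

A graph with a unique cycle cover `τ` has a vertex of degree one: otherwise pick for every `v` a
neighbour `g v ≠ τ v`; on the periodic points of `τ⁻¹ ∘ g` the map `g` is a bijection onto their
`τ`-image, so replacing `τ` by `g` there gives a second cycle cover. Deleting a degree-one vertex
together with its neighbour keeps the cycle cover unique, and induction finishes.
-/

open Function Set Equiv

theorem _root_.Function.exists_mem_periodicPts_of_mapsTo {α : Type*} [Finite α] {f : α → α}
    {s : Set α} (hf : MapsTo f s s) (hs : s.Nonempty) : ∃ x ∈ s, x ∈ periodicPts f := by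
  obtain ⟨x, hx⟩ := hs
  obtain ⟨m, n, hmn, heq⟩ := Finite.exists_ne_map_eq_of_infinite fun n : ℕ => f^[n] x
  wlog hlt : m < n generalizing m n
  · exact this n m hmn.symm heq.symm (hmn.lt_or_gt.resolve_left hlt)
  refine ⟨f^[m] x, hf.iterate m hx, mk_mem_periodicPts (Nat.sub_pos_of_lt hlt) ?_⟩
  rw [IsPeriodicPt, IsFixedPt, ← iterate_add_apply, Nat.sub_add_cancel hlt.le]
  exact heq.symm

theorem _root_.Equiv.Perm.injective_piecewise_periodicPts {α : Type*} (τ : Perm α)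
    (g : α → α) : Injective ((periodicPts (τ.symm ∘ g)).piecewise g τ) := by
  have hP := bijOn_periodicPts (τ.symm ∘ g)
  intro v w h
  by_cases hv : v ∈ periodicPts (τ.symm ∘ g) <;> by_cases hw : w ∈ periodicPts (τ.symm ∘ g) <;>
    simp only [piecewise_eq_of_mem, piecewise_eq_of_notMem, hv, hw, not_false_eq_true] at h
  · exact hP.injOn hv hw (by simp [h])
  · exact absurd (hP.mapsTo hv) (by simpa [h] using hw)
  · exact absurd (hP.mapsTo hw) (by simpa [← h] using hv)
  · exact τ.injective h

theorem _root_.SimpleGraph.adjMatrix_map {α β : Type*} (G : SimpleGraph V) [DecidableRel G.Adj]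
    [NonAssocSemiring α] [NonAssocSemiring β] (f : α →+* β) :
    (G.adjMatrix α).map f = G.adjMatrix β := by
  ext v w
  simp only [Matrix.map_apply, SimpleGraph.adjMatrix_apply]
  split_ifs <;> simp

variable {G : SimpleGraph V} {s : Set V} {σ τ : Perm V} {u v : V}

-- A cycle cover of `G[s]` (an edge counting as a 2-cycle), extended by the identity off `s`.
def IsCycleCoverOn (G : SimpleGraph V) (s : Set V) (σ : Perm V) : Prop :=
  (∀ v ∈ s, G.Adj v (σ v)) ∧ ∀ v ∉ s, σ v = v

theorem isCycleCoverOn_univ : IsCycleCoverOn G univ σ ↔ ∀ v, G.Adj v (σ v) := by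
  simp [IsCycleCoverOn]

namespace IsCycleCoverOn

theorem apply_mem (hσ : IsCycleCoverOn G s σ) (hv : v ∈ s) : σ v ∈ s := by
  by_contra h
  exact (hσ.1 v hv).ne (σ.injective (hσ.2 _ h)).symm

theorem inv (hσ : IsCycleCoverOn G s σ) : IsCycleCoverOn G s σ⁻¹ := by
  refine ⟨fun v hv => ?_, fun v hv => Perm.inv_eq_iff_eq.mpr (hσ.2 v hv).symm⟩
  have hmem : σ⁻¹ v ∈ s := by
    by_contra h
    have hfix : v = σ⁻¹ v := by simpa using hσ.2 _ h
    exact h (hfix ▸ hv)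
  simpa using (hσ.1 _ hmem).symm

theorem swap_mul_on_diff_pair (hσ : IsCycleCoverOn G s σ) (hu : σ u = v) (hv : σ v = u) :
    IsCycleCoverOn G (s \ {u, v}) (swap u v * σ) := by
  refine ⟨fun w hw => ?_, fun w hw => ?_⟩
  · have hwu : σ w ≠ u := fun h => hw.2 (Or.inr (σ.injective (h.trans hv.symm)))
    have hwv : σ w ≠ v := fun h => hw.2 (Or.inl (σ.injective (h.trans hu.symm)))
    rw [Perm.mul_apply, swap_apply_of_ne_of_ne hwu hwv]
    exact hσ.1 w hw.1
  · rw [Perm.mul_apply]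
    by_cases hwu : w = u
    · rw [hwu, hu, swap_apply_right]
    by_cases hwv : w = v
    · rw [hwv, hv, swap_apply_left]
    have hws : w ∉ s := fun h => hw ⟨h, by simp [hwu, hwv]⟩
    rw [hσ.2 w hws, swap_apply_of_ne_of_ne hwu hwv]

theorem swap_mul_of_diff_pair (hσ : IsCycleCoverOn G (s \ {u, v}) σ) (hu : u ∈ s) (hv : v ∈ s)
    (huv : G.Adj u v) : IsCycleCoverOn G s (swap u v * σ) := by
  have hσu : σ u = u := hσ.2 u fun h => h.2 (Or.inl rfl)
  have hσv : σ v = v := hσ.2 v fun h => h.2 (Or.inr rfl)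
  refine ⟨fun w hw => ?_, fun w hw => ?_⟩
  · rw [Perm.mul_apply]
    by_cases hwu : w = u
    · rwa [hwu, hσu, swap_apply_left]
    by_cases hwv : w = v
    · rw [hwv, hσv, swap_apply_right]
      exact huv.symm
    have hw' : w ∈ s \ {u, v} := ⟨hw, by simp [hwu, hwv]⟩
    have hmem := hσ.apply_mem hw'
    rw [swap_apply_of_ne_of_ne (fun h => hmem.2 (Or.inl h)) (fun h => hmem.2 (Or.inr h))]
    exact hσ.1 w hw'
  · have hwu : w ≠ u := fun h => hw (h ▸ hu)
    have hwv : w ≠ v := fun h => hw (h ▸ hv)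
    rw [Perm.mul_apply, hσ.2 w fun h => hw h.1, swap_apply_of_ne_of_ne hwu hwv]

end IsCycleCoverOn

theorem existsUnique_isCycleCoverOn_diff_pair (h : ∃! σ, IsCycleCoverOn G s σ) (hu : u ∈ s)
    (hv : v ∈ s) (huv : G.Adj u v) (hpend : ∀ w ∈ s, G.Adj v w → w = u) :
    ∃! σ, IsCycleCoverOn G (s \ {u, v}) σ := by
  obtain ⟨τ, hτ, huniq⟩ := h
  have hτv : τ v = u := hpend _ (hτ.apply_mem hv) (hτ.1 v hv)
  have hτu : τ u = v := by
    rw [← huniq _ hτ.inv]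
    exact Perm.inv_eq_iff_eq.mpr hτv.symm
  refine ⟨swap u v * τ, hτ.swap_mul_on_diff_pair hτu hτv, fun σ hσ => ?_⟩
  rw [← huniq _ (hσ.swap_mul_of_diff_pair hu hv huv), swap_mul_self_mul]

theorem exists_pendant_of_existsUnique_isCycleCoverOn [Finite V] (hs : s.Nonempty)
    (h : ∃! σ, IsCycleCoverOn G s σ) :
    ∃ u v, u ∈ s ∧ v ∈ s ∧ G.Adj u v ∧ ∀ w ∈ s, G.Adj v w → w = u := by
  obtain ⟨τ, hτ, huniq⟩ := h
  by_contra! hnone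
  choose! g₀ hg₀s hg₀adj hg₀ne using fun v hv =>
    hnone (τ v) v (hτ.apply_mem hv) hv (hτ.1 v hv).symm
  set g := s.piecewise g₀ τ
  have hmaps : MapsTo (τ.symm ∘ g) s s := fun v hv => by
    simp only [comp_apply, g, piecewise_eq_of_mem _ _ _ hv]
    exact hτ.inv.apply_mem (hg₀s v hv)
  obtain ⟨x, hxs, hxP⟩ := exists_mem_periodicPts_of_mapsTo hmaps hs
  set σ := Equiv.ofBijective _
    (Finite.injective_iff_bijective.mp (τ.injective_piecewise_periodicPts g))
  have hσ : IsCycleCoverOn G s σ := by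
    refine ⟨fun v hv => ?_, fun v hv => ?_⟩
    · by_cases hvP : v ∈ periodicPts (τ.symm ∘ g)
      · simpa [σ, g, hvP, hv] using hg₀adj v hv
      · simpa [σ, hvP] using hτ.1 v hv
    · by_cases hvP : v ∈ periodicPts (τ.symm ∘ g) <;> simp [σ, g, hvP, hv, hτ.2 v hv]
  apply hg₀ne x hxs
  calc g₀ x = σ x := by simp [σ, g, hxP, hxs]
    _ = τ x := by rw [huniq σ hσ]

theorem reflTransGen_k2Step_empty_of_existsUnique_isCycleCoverOn [Finite V] (s : Set V)
    (h : ∃! σ, IsCycleCoverOn G s σ) :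
    Relation.ReflTransGen (K2Step G) s ∅ := by
  induction s using WellFoundedLT.induction with
  | _ s ih =>
    rcases s.eq_empty_or_nonempty with rfl | hs
    · exact .refl
    obtain ⟨u, v, hu, hv, huv, hpend⟩ := exists_pendant_of_existsUnique_isCycleCoverOn hs h
    have hlt : s \ {u, v} < s := sdiff_ssubset_left_iff.mpr ⟨v, hv, Or.inr rfl⟩
    exact .head ⟨u, v, hu, hv, huv, hpend, rfl⟩
      (ih _ hlt (existsUnique_isCycleCoverOn_diff_pair h hu hv huv hpend))

def cycleCoverSubgraph (σ : Perm V) (hσ : ∀ v, G.Adj v (σ v)) : G.Subgraph where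
  verts := univ
  Adj a b := σ a = b ∨ σ b = a
  adj_sub := by
    rintro a b (rfl | rfl)
    exacts [hσ a, (hσ b).symm]
  edge_vert _ := mem_univ _
  symm := ⟨fun _ _ => Or.symm⟩

theorem neighborSet_cycleCoverSubgraph (hσ : ∀ v, G.Adj v (σ v)) (v : V) :
    (cycleCoverSubgraph σ hσ).neighborSet v = {σ v, σ⁻¹ v} := by
  ext w
  simp only [SimpleGraph.Subgraph.mem_neighborSet, cycleCoverSubgraph, mem_insert_iff,
    mem_singleton_iff, Perm.eq_inv_iff_eq]
  exact or_congr_left eq_comm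

theorem degree_cycleCoverSubgraph (hσ : ∀ v, G.Adj v (σ v)) (v : V)
    [Fintype ((cycleCoverSubgraph σ hσ).neighborSet v)] :
    (cycleCoverSubgraph σ hσ).degree v = if σ v = σ⁻¹ v then 1 else 2 := by
  rw [SimpleGraph.Subgraph.degree, ← Nat.card_eq_fintype_card, neighborSet_cycleCoverSubgraph,
    Nat.card_coe_set_eq]
  split_ifs with h
  · simp [h]
  · exact ncard_pair h

theorem isPerfect2Matching_cycleCoverSubgraph [Fintype V] (hσ : ∀ v, G.Adj v (σ v)) :
    IsPerfect2Matching G (cycleCoverSubgraph σ hσ) := by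
  refine ⟨fun _ => mem_univ _, fun v => ?_, fun v w hvw hv => ?_⟩
  · rw [degree_cycleCoverSubgraph]
    split_ifs <;> simp
  · rw [degree_cycleCoverSubgraph] at hv ⊢
    have hv' : σ v = σ⁻¹ v := by
      by_contra h
      rw [if_neg h] at hv
      omega
    have hw : w = σ v := by
      have := (neighborSet_cycleCoverSubgraph hσ v).subset hvw
      simpa [← hv'] using this
    have hσσ : σ (σ v) = v := by
      rw [hv']
      simp
    simp [hw, hσσ]

theorem exists_involutive_cycleCover_of_det_ne_zero [Fintype V]
    (h : (G.adjMatrix (ZMod 2)).det ≠ 0) : ∃ σ : Perm V, (∀ v, G.Adj v (σ v)) ∧ σ⁻¹ = σ := by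
  contrapose! h
  have hsign : ∀ σ : Perm V, Perm.sign σ • ∏ i, G.adjMatrix (ZMod 2) (σ i) i =
      ∏ i, G.adjMatrix (ZMod 2) (σ i) i := fun σ => by
    rcases Int.units_eq_one_or (Perm.sign σ) with hσ | hσ <;> simp [hσ, CharTwo.neg_eq]
  rw [Matrix.det_apply]
  simp_rw [hsign]
  refine Finset.sum_ninvolution (fun σ => σ⁻¹) (fun σ => ?_) (fun σ hσ => ?_)
    (fun _ => Finset.mem_univ _) inv_inv
  · have hinv : ∏ i, G.adjMatrix (ZMod 2) (σ⁻¹ i) i = ∏ i, G.adjMatrix (ZMod 2) (σ i) i := by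
      rw [← Equiv.prod_comp σ]
      simp [SimpleGraph.adjMatrix_apply, G.adj_comm]
    rw [hinv, CharTwo.add_self_eq_zero]
  · refine h σ fun v => ?_
    have := (Finset.prod_ne_zero_iff.mp hσ) v (Finset.mem_univ v)
    simpa [SimpleGraph.adjMatrix_apply, G.adj_comm] using this

theorem SignInvertible.isUnit_adjMatrix_int [Fintype V] (hs : SignInvertible G) :
    IsUnit (G.adjMatrix ℤ) := by
  have hint : ∀ x y, ∃ n : ℤ, (n : ℚ) = (adjM G)⁻¹ x y := fun x y => by
    have hxy := hs.2 x y
    simp only [mem_insert_iff, mem_singleton_iff] at hxy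
    rcases hxy with h | h | h
    exacts [⟨-1, by simp [h]⟩, ⟨0, by simp [h]⟩, ⟨1, by simp [h]⟩]
  choose B hB using hint
  have hBmap : (Int.castRingHom ℚ).mapMatrix (Matrix.of B) = (adjM G)⁻¹ := by
    ext x y
    exact hB x y
  have hAB : G.adjMatrix ℤ * Matrix.of B = 1 := by
    apply Matrix.map_injective (f := Int.castRingHom ℚ) Int.cast_injective
    change (Int.castRingHom ℚ).mapMatrix _ = (Int.castRingHom ℚ).mapMatrix _
    rw [map_mul, map_one, hBmap, RingHom.mapMatrix_apply, SimpleGraph.adjMatrix_map]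
    exact Matrix.mul_nonsing_inv _ ((Matrix.isUnit_iff_isUnit_det _).mp hs.1)
  exact (Matrix.isUnit_iff_isUnit_det _).mpr (Matrix.isUnit_det_of_right_inverse hAB)

theorem SignInvertible.det_adjMatrix_zmod_two_ne_zero [Fintype V] (hs : SignInvertible G) :
    (G.adjMatrix (ZMod 2)).det ≠ 0 := by
  have := hs.isUnit_adjMatrix_int.map (Int.castRingHom (ZMod 2)).mapMatrix
  rw [RingHom.mapMatrix_apply, SimpleGraph.adjMatrix_map, Matrix.isUnit_iff_isUnit_det] at this
  exact this.ne_zero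

theorem existsUnique_cycleCover_of_existsUnique_perfect2Matching [Fintype V]
    (h : ∃! H : G.Subgraph, IsPerfect2Matching G H) (hdet : (G.adjMatrix (ZMod 2)).det ≠ 0) :
    ∃! σ : Perm V, ∀ v, G.Adj v (σ v) := by
  obtain ⟨τ, hτ, hτinv⟩ := exists_involutive_cycleCover_of_det_ne_zero hdet
  refine ⟨τ, hτ, fun σ hσ => Perm.ext fun v => ?_⟩
  have hsub : cycleCoverSubgraph σ hσ = cycleCoverSubgraph τ hτ :=
    h.unique (isPerfect2Matching_cycleCoverSubgraph hσ) (isPerfect2Matching_cycleCoverSubgraph hτ)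
  have hnbr := congrArg (·.neighborSet v) hsub
  simp only [neighborSet_cycleCoverSubgraph, hτinv, pair_eq_singleton] at hnbr
  exact hnbr.subset (Or.inl rfl)

/-- A graph with a unique perfect 2-matching which is sign-invertible is
`K₂`-reducible. -/
theorem signInvertible_unique_perfect2Matching_k2Reducible {V : Type*} [Fintype V]
    (G : SimpleGraph V) (h : ∃! H : G.Subgraph, IsPerfect2Matching G H)
    (hs : SignInvertible G) : K2Reducible G := by
  have hcover := existsUnique_cycleCover_of_existsUnique_perfect2Matching h
    hs.det_adjMatrix_zmod_two_ne_zero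
  simp only [← isCycleCoverOn_univ] at hcover
  exact reflTransGen_k2Step_empty_of_existsUnique_isCycleCoverOn univ hcover

end SignInv
end
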